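/- The partitioned suffix array is a partition: Z[i+1] = Z[i] + |L_{X[i]}| for every i ∈ [1..r]; equivalently, the r intervals [LF(p(m)) .. LF(p(m)) + |L_m| − 1] for m ∈ [1..r] are pairwise disjoint and their union is [1..n]. -/
import Mathlib


/-- The suffix `T[i..n]` of a 1-indexed string of length `n` (as a list). -/
def suffix {α : Type*} (T : ℕ → α) (n i : ℕ) : List α :=
  (List.range' i (n + 1 - i)).map T

/-- `rank(L,c,i)`: the number of occurrences of the character `c` in `L[1..i]`. -/
def rankL {α : Type*} [DecidableEq α] (L : ℕ → α) (c : α) (i : ℕ) : ℕ :=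
  ((Finset.Icc 1 i).filter (fun j => L j = c)).card

/-- `C[c]`: the number of positions `j ∈ [1..n]` with `L[j]` strictly smaller than `c`. -/
def Cc {α : Type*} [LinearOrder α] (L : ℕ → α) (n : ℕ) (c : α) : ℕ :=
  ((Finset.Icc 1 n).filter (fun j => L j < c)).card

/-- `LF(i) = C[L[i]] + rank(L, L[i], i)`. -/
def LF {α : Type*} [LinearOrder α] (L : ℕ → α) (n i : ℕ) : ℕ :=
  Cc L n (L i) + rankL L (L i) i

lemma rank_mono {α : Type*} [DecidableEq α] (L : ℕ → α) (c : α) {i j : ℕ} (h : i ≤ j) :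
    rankL L c i ≤ rankL L c j :=
  Finset.card_le_card (Finset.filter_subset_filter _ (Finset.Icc_subset_Icc_right h))

lemma rank_lt {α : Type*} [DecidableEq α] (L : ℕ → α) {c : α} {i j : ℕ}
    (h1 : i < j) (hj : 1 ≤ j) (hc : L j = c) : rankL L c i < rankL L c j := by
  apply Finset.card_lt_card
  constructor
  · exact Finset.filter_subset_filter _ (Finset.Icc_subset_Icc_right h1.le)
  · intro hsub
    have := hsub (by simp [Finset.mem_filter, hj, hc] : j ∈ (Finset.Icc 1 j).filter (fun k => L k = c))
    simp [Finset.mem_filter] at this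
    omega

lemma rankL_pos {α : Type*} [DecidableEq α] (L : ℕ → α) {c : α} {i : ℕ}
    (hi : 1 ≤ i) (hc : L i = c) : 1 ≤ rankL L c i := by
  have : i ∈ (Finset.Icc 1 i).filter (fun k => L k = c) := by simp [hi, hc]
  exact Finset.card_pos.mpr ⟨i, this⟩ 

lemma rank_succ {α : Type*} [DecidableEq α] (L : ℕ → α) {c : α} (j : ℕ) (h : L (j+1) = c) :
    rankL L c (j+1) = rankL L c j + 1 := by
  unfold rankL
  rw [show Finset.Icc 1 (j+1) = insert (j+1) (Finset.Icc 1 j) by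
    exact (Finset.insert_Icc_right_eq_Icc_add_one (by omega)).symm]
  rw [Finset.filter_insert, if_pos h, Finset.card_insert_of_notMem (by simp)]

lemma cc_add_rank {α : Type*} [LinearOrder α] (L : ℕ → α) (n : ℕ) (c : α) :
    Cc L n c + rankL L c n = ((Finset.Icc 1 n).filter (fun j => L j ≤ c)).card := by
  unfold Cc rankL
  rw [← Finset.card_union_of_disjoint, ← Finset.filter_or]
  · congr 1; apply Finset.filter_congr; intro x _; simp [le_iff_lt_or_eq]
  · rw [Finset.disjoint_filter]
    intro x _ h1 h2
    exact h1.ne' h2.symm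

lemma cc_rank_le {α : Type*} [LinearOrder α] (L : ℕ → α) (n : ℕ) (c : α) :
    Cc L n c + rankL L c n ≤ n := by
  rw [cc_add_rank]
  calc ((Finset.Icc 1 n).filter (fun j => L j ≤ c)).card
      ≤ (Finset.Icc 1 n).card := Finset.card_filter_le _ _
    _ = n := by rw [Nat.card_Icc]; omega

lemma cc_rank_lt_cc {α : Type*} [LinearOrder α] (L : ℕ → α) (n : ℕ) {c c' : α} (h : c < c') :
    Cc L n c + rankL L c n ≤ Cc L n c' := by
  rw [cc_add_rank]
  apply Finset.card_le_card
  intro x hx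
  simp only [Finset.mem_filter] at hx ⊢
  exact ⟨hx.1, lt_of_le_of_lt hx.2 h⟩

lemma LF_mem {α : Type*} [LinearOrder α] (L : ℕ → α) (n : ℕ) {i : ℕ}
    (h1 : 1 ≤ i) (h2 : i ≤ n) : 1 ≤ LF L n i ∧ LF L n i ≤ n := by
  constructor
  · have := rankL_pos L h1 (rfl : L i = L i)
    unfold LF; omega
  · have h3 := rank_mono L (L i) h2
    have h4 := cc_rank_le L n (L i)
    unfold LF; omega

lemma LF_injOn {α : Type*} [LinearOrder α] (L : ℕ → α) (n : ℕ) {i j : ℕ}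
    (hi1 : 1 ≤ i) (hi2 : i ≤ n) (hj1 : 1 ≤ j) (hj2 : j ≤ n) (hij : i ≠ j) :
    LF L n i ≠ LF L n j := by
  rcases lt_trichotomy (L i) (L j) with h | h | h
  · have h1 := cc_rank_lt_cc L n h
    have h2 := rank_mono L (L i) hi2
    have h3 := rankL_pos L hj1 (rfl : L j = L j)
    unfold LF; omega
  · rcases Nat.lt_or_ge i j with hlt | hge
    · have := rank_lt L hlt hj1 (rfl : L j = L j)
      unfold LF
      rw [h]
      omega
    · have hlt : j < i := by omega
      have := rank_lt L hlt hi1 (rfl : L i = L i)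
      unfold LF
      rw [h]
      rw [h] at this
      omega
  · have h1 := cc_rank_lt_cc L n h
    have h2 := rank_mono L (L j) hj2
    have h3 := rankL_pos L hi1 (rfl : L i = L i)
    unfold LF; omega

theorem stmt6' {α : Type*} [LinearOrder α] (n : ℕ) (hn : 1 ≤ n)
    (L : ℕ → α)
    (r : ℕ) (p len : ℕ → ℕ) (hr : 1 ≤ r)
    (hp1 : p 1 = 1) (hpend : p (r + 1) = n + 1)
    (hpsucc : ∀ m, 1 ≤ m → m ≤ r → p (m + 1) = p m + len m)
    (hlen : ∀ m, 1 ≤ m → m ≤ r → 1 ≤ len m)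
    (hrunconst : ∀ m, 1 ≤ m → m ≤ r → ∀ j, p m ≤ j → j < p (m + 1) → L j = L (p m))
    (X : ℕ → ℕ)
    (hXbij : Set.BijOn X (Set.Icc 1 r) (Set.Icc 1 r))
    (hXsorted : ∀ i j, 1 ≤ i → i < j → j ≤ r → LF L n (p (X i)) < LF L n (p (X j)))
    (Z : ℕ → ℕ)
    (hZ : ∀ i, 1 ≤ i → i ≤ r → Z i = LF L n (p (X i)))
    (hZend : Z (r + 1) = n + 1) :
    (∀ i, 1 ≤ i → i ≤ r → Z (i + 1) = Z i + len (X i)) ∧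
    (∀ m m', 1 ≤ m → m ≤ r → 1 ≤ m' → m' ≤ r → m ≠ m' →
      Disjoint (Set.Icc (LF L n (p m)) (LF L n (p m) + len m - 1))
               (Set.Icc (LF L n (p m')) (LF L n (p m') + len m' - 1))) ∧
    (⋃ m ∈ Set.Icc 1 r, Set.Icc (LF L n (p m)) (LF L n (p m) + len m - 1))
      = Set.Icc 1 n := by
  -- monotonicity of p
  have hstep : ∀ m, 1 ≤ m → m ≤ r → p m < p (m + 1) := by
    intro m h1 h2
    have := hpsucc m h1 h2; have := hlen m h1 h2; omega
  have hmono : ∀ k a, 1 ≤ a → a + k ≤ r + 1 → p a ≤ p (a + k) := by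
    intro k
    induction k with
    | zero => intro a _ _; simp
    | succ k ih =>
      intro a h1 h2
      have h3 : p a ≤ p (a + k) := ih a h1 (by omega)
      have h4 : p (a + k) < p (a + k + 1) := hstep (a + k) (by omega) (by omega)
      have e : a + (k + 1) = a + k + 1 := by omega
      rw [e]
      omega
  have hple : ∀ a b, 1 ≤ a → a ≤ b → b ≤ r + 1 → p a ≤ p b := by
    intro a b h1 h2 h3
    have := hmono (b - a) a h1 (by omega)
    have e : a + (b - a) = b := by omega
    rwa [e] at this
  have hpbound : ∀ m, 1 ≤ m → m ≤ r → 1 ≤ p m ∧ p m + len m ≤ n + 1 := by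
    intro m h1 h2
    have hA := hple 1 m le_rfl h1 (by omega)
    have hB := hple (m + 1) (r + 1) (by omega) (by omega) le_rfl
    rw [hp1] at hA
    rw [hpend] at hB
    have := hpsucc m h1 h2
    omega
  -- LF on runs is additive
  have hLFrun : ∀ m, 1 ≤ m → m ≤ r → ∀ t, t < len m →
      LF L n (p m + t) = LF L n (p m) + t := by
    intro m h1 h2 t
    induction t with
    | zero => intro _; simp
    | succ t ih =>
      intro ht
      have ih' := ih (by omega)
      have hps := hpsucc m h1 h2
      have hc1 : L (p m + t + 1) = L (p m) := hrunconst m h1 h2 _ (by omega) (by omega)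
      have hc2 : L (p m + t) = L (p m) := hrunconst m h1 h2 _ (by omega) (by omega)
      have e1 : LF L n (p m + (t + 1)) =
          Cc L n (L (p m)) + rankL L (L (p m)) (p m + t + 1) := by
        show Cc L n (L (p m + t + 1)) + rankL L (L (p m + t + 1)) (p m + t + 1) = _
        rw [hc1]
      have e2 : LF L n (p m + t) =
          Cc L n (L (p m)) + rankL L (L (p m)) (p m + t) := by
        show Cc L n (L (p m + t)) + rankL L (L (p m + t)) (p m + t) = _
        rw [hc2]
      have e3 := rank_succ L (p m + t) hc1
      omega
  -- each position in [1..n] belongs to some run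
  have hfind : ∀ j, 1 ≤ j → j ≤ n → ∃ m, 1 ≤ m ∧ m ≤ r ∧ p m ≤ j ∧ j < p m + len m := by
    intro j hj1 hj2
    set S : Finset ℕ := (Finset.Icc 1 r).filter (fun m => p m ≤ j) with hS
    have hne : S.Nonempty := ⟨1, by simp [hS, hr, hp1, hj1]⟩
    set m := S.max' hne with hm
    have hmem : m ∈ S := S.max'_mem hne
    simp only [hS, Finset.mem_filter, Finset.mem_Icc] at hmem
    refine ⟨m, hmem.1.1, hmem.1.2, hmem.2, ?_⟩
    rw [← hpsucc m hmem.1.1 hmem.1.2]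
    by_cases hmr : m = r
    · rw [hmr, hpend]; omega
    · by_contra hcon
      push_neg at hcon
      have : m + 1 ∈ S := by
        simp only [hS, Finset.mem_filter, Finset.mem_Icc]
        exact ⟨⟨by omega, by omega⟩, hcon⟩
      have := S.le_max' _ this
      omega
  -- LF image of [1..n]
  have himg : Finset.image (LF L n) (Finset.Icc 1 n) = Finset.Icc 1 n := by
    apply Finset.eq_of_subset_of_card_le
    · intro x hx
      simp only [Finset.mem_image, Finset.mem_Icc] at hx ⊢
      obtain ⟨i, ⟨hi1, hi2⟩, rfl⟩ := hx
      exact LF_mem L n hi1 hi2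
    · rw [Finset.card_image_of_injOn]
      intro a ha b hb hab
      simp only [Finset.coe_Icc, Set.mem_Icc] at ha hb
      by_contra hne
      exact LF_injOn L n ha.1 ha.2 hb.1 hb.2 hne hab
  -- part 2: disjointness
  have hdisj : ∀ m m', 1 ≤ m → m ≤ r → 1 ≤ m' → m' ≤ r → m ≠ m' →
      Disjoint (Set.Icc (LF L n (p m)) (LF L n (p m) + len m - 1))
               (Set.Icc (LF L n (p m')) (LF L n (p m') + len m' - 1)) := by
    intro m m' h1 h2 h1' h2' hne
    rw [Set.disjoint_left]
    rintro x ⟨hx1, hx2⟩ ⟨hy1, hy2⟩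
    have hl := hlen m h1 h2
    have hl' := hlen m' h1' h2'
    set t := x - LF L n (p m) with htdef
    set t' := x - LF L n (p m') with htdef'
    have ht : t < len m := by omega
    have ht' : t' < len m' := by omega
    have hx : x = LF L n (p m + t) := by rw [hLFrun m h1 h2 t ht]; omega
    have hy : x = LF L n (p m' + t') := by rw [hLFrun m' h1' h2' t' ht']; omega
    have hb := hpbound m h1 h2
    have hb' := hpbound m' h1' h2'
    have hneq : p m + t ≠ p m' + t' := by
      rcases Nat.lt_or_ge m m' with hlt | hge
      · have := hpsucc m h1 h2
        have := hple (m + 1) m' (by omega) (by omega) (by omega)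
        omega
      · have hlt : m' < m := by omega
        have := hpsucc m' h1' h2'
        have := hple (m' + 1) m (by omega) (by omega) (by omega)
        omega
    exact LF_injOn L n (by omega) (by omega) (by omega) (by omega) hneq (by omega)
  -- part 3: union
  have hunion : (⋃ m ∈ Set.Icc 1 r, Set.Icc (LF L n (p m)) (LF L n (p m) + len m - 1))
      = Set.Icc 1 n := by
    ext x
    simp only [Set.mem_iUnion, Set.mem_Icc, exists_prop]
    constructor
    · rintro ⟨m, ⟨h1, h2⟩, hx1, hx2⟩
      have hl := hlen m h1 h2
      have hb := hpbound m h1 h2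
      set t := x - LF L n (p m) with htdef
      have ht : t < len m := by omega
      have hx : x = LF L n (p m + t) := by rw [hLFrun m h1 h2 t ht]; omega
      have := LF_mem L n (i := p m + t) (by omega) (by omega)
      omega
    · rintro ⟨hx1, hx2⟩
      have : x ∈ Finset.image (LF L n) (Finset.Icc 1 n) := by
        rw [himg]; simp only [Finset.mem_Icc]; exact ⟨hx1, hx2⟩
      simp only [Finset.mem_image, Finset.mem_Icc] at this
      obtain ⟨i, ⟨hi1, hi2⟩, rfl⟩ := this
      obtain ⟨m, h1, h2, hm1, hm2⟩ := hfind i hi1 hi2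
      have hl := hlen m h1 h2
      have ht : i - p m < len m := by omega
      have := hLFrun m h1 h2 (i - p m) ht
      have e : p m + (i - p m) = i := by omega
      rw [e] at this
      exact ⟨m, ⟨h1, h2⟩, by omega, by omega⟩
  refine ⟨?_, hdisj, hunion⟩
  -- part 1
  have hXmem : ∀ i, 1 ≤ i → i ≤ r → 1 ≤ X i ∧ X i ≤ r := by
    intro i h1 h2
    have := hXbij.mapsTo (Set.mem_Icc.mpr ⟨h1, h2⟩)
    exact Set.mem_Icc.mp this
  have hZmem : ∀ i, 1 ≤ i → i ≤ r → 1 ≤ Z i ∧ Z i + len (X i) - 1 ≤ n := by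
    intro i h1 h2
    obtain ⟨hx1, hx2⟩ := hXmem i h1 h2
    have hb := hpbound (X i) hx1 hx2
    have hl := hlen (X i) hx1 hx2
    have h3 := (LF_mem L n (i := p (X i)) (by omega) (by omega)).1
    have h4 := hLFrun (X i) hx1 hx2 (len (X i) - 1) (by omega)
    have h5 := (LF_mem L n (i := p (X i) + (len (X i) - 1)) (by omega) (by omega)).2
    rw [hZ i h1 h2]
    omega
  -- coverage in terms of Z
  have hcov : ∀ x, 1 ≤ x → x ≤ n → ∃ k, 1 ≤ k ∧ k ≤ r ∧ Z k ≤ x ∧ x ≤ Z k + len (X k) - 1 := by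
    intro x hx1 hx2
    have : x ∈ ⋃ m ∈ Set.Icc 1 r, Set.Icc (LF L n (p m)) (LF L n (p m) + len m - 1) := by
      rw [hunion]; exact Set.mem_Icc.mpr ⟨hx1, hx2⟩
    simp only [Set.mem_iUnion, Set.mem_Icc, exists_prop] at this
    obtain ⟨m, ⟨h1, h2⟩, hm1, hm2⟩ := this
    obtain ⟨k, hk, hkm⟩ := hXbij.surjOn (Set.mem_Icc.mpr ⟨h1, h2⟩)
    rw [Set.mem_Icc] at hk
    refine ⟨k, hk.1, hk.2, ?_, ?_⟩ <;> rw [hZ k hk.1 hk.2, hkm] <;> omega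
  have hZdisj : ∀ k k', 1 ≤ k → k ≤ r → 1 ≤ k' → k' ≤ r → k ≠ k' →
      ∀ x, Z k ≤ x → x ≤ Z k + len (X k) - 1 → Z k' ≤ x → x ≤ Z k' + len (X k') - 1 → False := by
    intro k k' h1 h2 h1' h2' hne x ha hb hc hd
    obtain ⟨hx1, hx2⟩ := hXmem k h1 h2
    obtain ⟨hx1', hx2'⟩ := hXmem k' h1' h2'
    have hXne : X k ≠ X k' := by
      intro he
      exact hne (hXbij.injOn (Set.mem_Icc.mpr ⟨h1, h2⟩) (Set.mem_Icc.mpr ⟨h1', h2'⟩) he)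
    have := hdisj (X k) (X k') hx1 hx2 hx1' hx2' hXne
    rw [Set.disjoint_left] at this
    rw [hZ k h1 h2] at ha hb
    rw [hZ k' h1' h2'] at hc hd
    exact this (Set.mem_Icc.mpr ⟨ha, hb⟩) (Set.mem_Icc.mpr ⟨hc, hd⟩)
  have hZsorted : ∀ i j, 1 ≤ i → i < j → j ≤ r → Z i < Z j := by
    intro i j h1 h2 h3
    rw [hZ i h1 (by omega), hZ j (by omega) h3]
    exact hXsorted i j h1 h2 h3
  intro i h1 h2
  have hli := hlen (X i) (hXmem i h1 h2).1 (hXmem i h1 h2).2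
  obtain ⟨hzi1, hzi2⟩ := hZmem i h1 h2
  by_cases hir : i = r
  · -- last interval: n ∈ J_r
    obtain ⟨k, hk1, hk2, hk3, hk4⟩ := hcov n (by omega) le_rfl
    have hkr : k = i := by
      by_contra hne
      have hklt : k < i := by omega
      have hZr : Z k < Z i := hZsorted k i hk1 hklt h2
      exact hZdisj k i hk1 hk2 h1 h2 hne (Z i) (by omega) (by omega) le_rfl (by omega)
    rw [hkr] at hk3 hk4
    have he : Z (i + 1) = n + 1 := by rw [hir]; exact hZend
    omega
  · have hlt : i < r := by omega
    have hzsucc := hZsorted i (i + 1) h1 (by omega) (by omega)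
    obtain ⟨hzi1', hzi2'⟩ := hZmem (i + 1) (by omega) (by omega)
    -- step 1 : Z (i+1) ≥ Z i + len (X i)
    have hli' := hlen (X (i + 1)) (hXmem (i + 1) (by omega) (by omega)).1
      (hXmem (i + 1) (by omega) (by omega)).2
    have step1 : Z i + len (X i) ≤ Z (i + 1) := by
      by_contra hcon
      push_neg at hcon
      have ha : Z i ≤ Z (i + 1) := le_of_lt hzsucc
      have hb : Z (i + 1) ≤ Z i + len (X i) - 1 := by omega
      have hd : Z (i + 1) ≤ Z (i + 1) + len (X (i + 1)) - 1 := by omega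
      exact hZdisj i (i + 1) h1 h2 (by omega) (by omega) (by omega) (Z (i + 1)) ha hb le_rfl hd
    -- step 2
    obtain ⟨k, hk1, hk2, hk3, hk4⟩ := hcov (Z i + len (X i)) (by omega) (by omega)
    have hki : k ≠ i := by
      intro he; subst he; omega
    have hk_eq : k = i + 1 := by
      rcases Nat.lt_trichotomy k (i + 1) with hklt | hkeq | hkgt
      · have hklt' : k < i := by omega
        have hzk := hZsorted k i hk1 hklt' h2
        have ha : Z k ≤ Z i := le_of_lt hzk
        have hb : Z i ≤ Z k + len (X k) - 1 := by omega
        have hd : Z i ≤ Z i + len (X i) - 1 := by omega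
        exact (hZdisj k i hk1 (by omega) h1 h2 hki (Z i) ha hb le_rfl hd).elim
      · exact hkeq
      · have := hZsorted (i + 1) k (by omega) hkgt hk2
        omega
    subst hk_eq
    omega


/-- The partitioned suffix array is a partition: `Z[i+1] = Z[i] + |L_{X[i]}|`
for every `i ∈ [1..r]`; equivalently, the `r` intervals
`[LF(p(m)) .. LF(p(m)) + |L_m| − 1]` for `m ∈ [1..r]` are pairwise disjoint and
their union is `[1..n]`. -/
theorem stmt6 {α : Type*} [LinearOrder α] (n : ℕ) (hn : 1 ≤ n)
    (T : ℕ → α) (SA : ℕ → ℕ) (L : ℕ → α)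
    (hlast : ∀ i, 1 ≤ i → i < n → T n < T i)
    (hSAbij : Set.BijOn SA (Set.Icc 1 n) (Set.Icc 1 n))
    (hSAsorted : ∀ i j, 1 ≤ i → i < j → j ≤ n →
      List.Lex (· < ·) (suffix T n (SA i)) (suffix T n (SA j)))
    (hL : ∀ i, 1 ≤ i → i ≤ n → L i = if SA i = 1 then T n else T (SA i - 1))
    -- the run-length encoding `L_1, …, L_r` of `L`: run `L_m` starts at `p m`
    -- and has length `len m`
    (r : ℕ) (p len : ℕ → ℕ) (hr : 1 ≤ r)
    (hp1 : p 1 = 1) (hpend : p (r + 1) = n + 1)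
    (hpsucc : ∀ m, 1 ≤ m → m ≤ r → p (m + 1) = p m + len m)
    (hlen : ∀ m, 1 ≤ m → m ≤ r → 1 ≤ len m)
    (hrunconst : ∀ m, 1 ≤ m → m ≤ r → ∀ j, p m ≤ j → j < p (m + 1) → L j = L (p m))
    (hrunmax : ∀ m, 1 ≤ m → m < r → L (p m) ≠ L (p (m + 1)))
    -- `X` is the permutation of `[1..r]` sorting the runs by `LF(p(·))`
    (X : ℕ → ℕ)
    (hXbij : Set.BijOn X (Set.Icc 1 r) (Set.Icc 1 r))
    (hXsorted : ∀ i j, 1 ≤ i → i < j → j ≤ r → LF L n (p (X i)) < LF L n (p (X j)))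
    -- `Z[i] = LF(p(X[i]))` for `i ∈ [1..r]`, and `Z[r+1] = n+1`
    (Z : ℕ → ℕ)
    (hZ : ∀ i, 1 ≤ i → i ≤ r → Z i = LF L n (p (X i)))
    (hZend : Z (r + 1) = n + 1) :
    (∀ i, 1 ≤ i → i ≤ r → Z (i + 1) = Z i + len (X i)) ∧
    (∀ m m', 1 ≤ m → m ≤ r → 1 ≤ m' → m' ≤ r → m ≠ m' →
      Disjoint (Set.Icc (LF L n (p m)) (LF L n (p m) + len m - 1))
               (Set.Icc (LF L n (p m')) (LF L n (p m') + len m' - 1))) ∧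
    (⋃ m ∈ Set.Icc 1 r, Set.Icc (LF L n (p m)) (LF L n (p m) + len m - 1))
      = Set.Icc 1 n := by
  exact stmt6' n hn L r p len hr hp1 hpend hpsucc hlen hrunconst X hXbij hXsorted Z hZ hZend
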